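/- Let μ be a subprobability on [0,1/2]×[1/2,1] with uniform marginals such that I₂(μ) := ∫ 1[x₁<x₂<y₁<y₂] dμ(x₁,y₁)dμ(x₂,y₂) = 0. Then μ = Ω, where Ω is the pushforward of the Lebesgue measure on [0,1/2] under x ↦ (x, 1−x); equivalently, μ([0,a]×[1−b,1]) = min(a,b) for all a,b ∈ [0,1/2]. -/

import Mathlib

/-!
By the marginal constraints, `R = [0,a] × [c,1]` has mass at most `min a (1 - c)`. Conversely,
`S = [0,a] × (1/2,c)` and `Q = (a,1/2] × [c,1]` satisfy `S × Q ⊆ {x₁ < x₂ < y₁ < y₂}`, so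
`I₂(μ) = 0` forces `μ S = 0` or `μ Q = 0`. In the first case the vertical strip `[0,a] × ℝ` is
`R` up to a null set, in the second the horizontal strip `ℝ × [c,1]` is; either way
`μ R ≥ min a (1 - c)`. Hence `μ` and `Ω` agree on all quadrants `(-∞,a] × [c,∞)`, and these
determine a finite measure on `ℝ²`.
-/

open MeasureTheory Set

/-- `Ω`, the uniform measure of total mass 1/2 on the segment `{(x,1−x) : x ∈ [0,1/2]}`:
the pushforward of Lebesgue measure on `[0,1/2]` by `x ↦ (x, 1−x)`. -/
noncomputable def OmegaMeas : Measure (ℝ × ℝ) :=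
  Measure.map (fun x : ℝ => (x, 1 - x)) (volume.restrict (Set.Icc (0 : ℝ) (1 / 2)))

lemma Real.isCountablySpanning_range_Iic : IsCountablySpanning (range (Iic : ℝ → Set ℝ)) :=
  ⟨fun n : ℕ => Iic (n : ℝ), fun _ => mem_range_self _,
    iUnion_eq_univ_iff.2 fun x => exists_nat_ge x⟩

lemma Real.isCountablySpanning_range_Ici : IsCountablySpanning (range (Ici : ℝ → Set ℝ)) :=
  ⟨fun n : ℕ => Ici (-n : ℝ), fun _ => mem_range_self _,
    iUnion_eq_univ_iff.2 fun x => (exists_nat_ge (-x)).imp fun _ h => neg_le.1 h⟩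

lemma MeasureTheory.Measure.ext_of_Iic_prod_Ici {μ ν : Measure (ℝ × ℝ)} [IsFiniteMeasure μ]
    (h : ∀ a c : ℝ, μ (Iic a ×ˢ Ici c) = ν (Iic a ×ˢ Ici c)) : μ = ν := by
  refine ext_of_generateFrom_of_iUnion _ (fun n : ℕ => Iic (n : ℝ) ×ˢ Ici (-n : ℝ))
    (generateFrom_eq_prod (borel_eq_generateFrom_Iic ℝ).symm (borel_eq_generateFrom_Ici ℝ).symm
      Real.isCountablySpanning_range_Iic Real.isCountablySpanning_range_Ici).symm
    (isPiSystem_Iic.prod isPiSystem_Ici) ?_ (fun n => mem_image2_of_mem (mem_range_self _)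
      (mem_range_self _)) (fun _ => measure_ne_top _ _) ?_
  · refine iUnion_eq_univ_iff.2 fun p => ?_
    obtain ⟨n, hn⟩ := exists_nat_ge (max p.1 (-p.2))
    exact ⟨n, (max_le_iff.1 hn).1, neg_le.1 (max_le_iff.1 hn).2⟩
  · rintro _ ⟨_, ⟨a, rfl⟩, _, ⟨c, rfl⟩, rfl⟩
    exact h a c

lemma OmegaMeas_Iic_prod_Ici (a c : ℝ) :
    OmegaMeas (Iic a ×ˢ Ici c) = ENNReal.ofReal (min (min a (1 / 2)) (1 - c)) := by
  have hmeas : Measurable fun x : ℝ => (x, 1 - x) := by fun_prop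
  have hpre : (fun x : ℝ => (x, 1 - x)) ⁻¹' (Iic a ×ˢ Ici c) ∩ Icc 0 (1 / 2) =
      Icc 0 (min (min a (1 / 2)) (1 - c)) := by
    ext x
    simp only [mem_inter_iff, mem_preimage, mem_prod, mem_Iic, mem_Ici, mem_Icc, le_min_iff]
    constructor
    · rintro ⟨⟨hxa, hxc⟩, hx0, hx⟩
      exact ⟨hx0, ⟨hxa, hx⟩, by linarith⟩
    · rintro ⟨hx0, ⟨hxa, hx⟩, hxc⟩
      exact ⟨⟨hxa, by linarith⟩, hx0, hx⟩
  rw [OmegaMeas, Measure.map_apply hmeas (measurableSet_Iic.prod measurableSet_Ici),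
    Measure.restrict_apply (hmeas (measurableSet_Iic.prod measurableSet_Ici)), hpre,
    Real.volume_Icc, sub_zero]

lemma measure_Icc_prod_Icc_eq_min {μ : Measure (ℝ × ℝ)} [SFinite μ]
    (hsupp : μ ((Icc (0 : ℝ) (1 / 2) ×ˢ Icc (1 / 2 : ℝ) 1)ᶜ) = 0)
    (hx : ∀ a b : ℝ, 0 ≤ a → a ≤ b → b ≤ 1 / 2 →
      μ {p : ℝ × ℝ | a ≤ p.1 ∧ p.1 ≤ b} = ENNReal.ofReal (b - a))
    (hy : ∀ a b : ℝ, 1 / 2 ≤ a → a ≤ b → b ≤ 1 →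
      μ {p : ℝ × ℝ | a ≤ p.2 ∧ p.2 ≤ b} = ENNReal.ofReal (b - a))
    (hI2 : (μ.prod μ) {q : (ℝ × ℝ) × (ℝ × ℝ) |
      q.1.1 < q.2.1 ∧ q.2.1 < q.1.2 ∧ q.1.2 < q.2.2} = 0)
    {a c : ℝ} (ha₀ : 0 ≤ a) (ha : a ≤ 1 / 2) (hc : 1 / 2 ≤ c) (hc₁ : c ≤ 1) :
    μ (Icc 0 a ×ˢ Icc c 1) = ENNReal.ofReal (min a (1 - c)) := by
  have hstrip₁ := hx 0 a le_rfl ha₀ ha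
  have hstrip₂ := hy c 1 hc hc₁ le_rfl
  have hline := hy (1 / 2) (1 / 2) le_rfl le_rfl (by norm_num)
  rw [sub_zero] at hstrip₁
  rw [sub_self, ENNReal.ofReal_zero] at hline
  -- `S` must avoid the null line `y = 1/2`, since points of `Q` may have `x = 1/2`
  set S : Set (ℝ × ℝ) := {p | p.1 ≤ a ∧ 1 / 2 < p.2 ∧ p.2 < c}
  set Q : Set (ℝ × ℝ) := {p | a < p.1 ∧ p.1 ≤ 1 / 2 ∧ c ≤ p.2}
  have hSQ : μ S * μ Q = 0 := by
    rw [← Measure.prod_prod]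
    refine measure_mono_null ?_ hI2
    rintro ⟨p, q⟩ ⟨hp, hq⟩
    exact ⟨hp.1.trans_lt hq.1, hq.2.1.trans_lt hp.2.1, hp.2.2.trans_le hq.2.2⟩
  have hupper : μ (Icc 0 a ×ˢ Icc c 1) ≤ ENNReal.ofReal (min a (1 - c)) := by
    rw [ENNReal.ofReal_min, ← hstrip₁, ← hstrip₂]
    exact le_min (measure_mono fun p hp => hp.1) (measure_mono fun p hp => hp.2)
  refine le_antisymm hupper ?_
  rcases mul_eq_zero.1 hSQ with hS | hQ
  · have hnull := measure_union_null (measure_union_null hS hsupp) hline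
    refine (ENNReal.ofReal_le_ofReal (min_le_left _ _)).trans ?_
    rw [← hstrip₁, ← measure_sdiff_null hnull]
    refine measure_mono ?_
    rintro p ⟨⟨hp₀, hpa⟩, hp⟩
    simp only [mem_union, mem_compl_iff, not_or, not_not] at hp
    obtain ⟨⟨hpS, hpT⟩, hpL⟩ := hp
    refine ⟨⟨hp₀, hpa⟩, not_lt.1 fun hpc => hpS ⟨hpa, ?_, hpc⟩, hpT.2.2⟩
    exact hpT.2.1.lt_of_ne fun h => hpL ⟨h.le, h.ge⟩
  · have hnull := measure_union_null hQ hsupp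
    refine (ENNReal.ofReal_le_ofReal (min_le_right _ _)).trans ?_
    rw [← hstrip₂, ← measure_sdiff_null hnull]
    refine measure_mono ?_
    rintro p ⟨⟨hpc, hp₁⟩, hp⟩
    simp only [mem_union, mem_compl_iff, not_or, not_not] at hp
    obtain ⟨hpQ, hpT⟩ := hp
    exact ⟨⟨hpT.1.1, not_lt.1 fun hpa => hpQ ⟨hpa, hpT.1.2, hpc⟩⟩, hpc, hp₁⟩

lemma measure_Iic_prod_Ici_eq {μ : Measure (ℝ × ℝ)} [SFinite μ]
    (hsupp : μ ((Icc (0 : ℝ) (1 / 2) ×ˢ Icc (1 / 2 : ℝ) 1)ᶜ) = 0)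
    (hx : ∀ a b : ℝ, 0 ≤ a → a ≤ b → b ≤ 1 / 2 →
      μ {p : ℝ × ℝ | a ≤ p.1 ∧ p.1 ≤ b} = ENNReal.ofReal (b - a))
    (hy : ∀ a b : ℝ, 1 / 2 ≤ a → a ≤ b → b ≤ 1 →
      μ {p : ℝ × ℝ | a ≤ p.2 ∧ p.2 ≤ b} = ENNReal.ofReal (b - a))
    (hI2 : (μ.prod μ) {q : (ℝ × ℝ) × (ℝ × ℝ) |
      q.1.1 < q.2.1 ∧ q.2.1 < q.1.2 ∧ q.1.2 < q.2.2} = 0) (a c : ℝ) :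
    μ (Iic a ×ˢ Ici c) = ENNReal.ofReal (min (min a (1 / 2)) (1 - c)) := by
  rcases lt_or_ge a 0 with ha | ha
  · rw [measure_mono_null (fun p hp hpT => (hpT.1.1.trans hp.1).not_gt ha) hsupp, eq_comm,
      ENNReal.ofReal_eq_zero]
    exact (min_le_left _ _).trans ((min_le_left _ _).trans ha.le)
  rcases lt_or_ge 1 c with hc | hc
  · rw [measure_mono_null (fun p hp hpT => (hp.2.trans hpT.2.2).not_gt hc) hsupp, eq_comm,
      ENNReal.ofReal_eq_zero]
    exact (min_le_right _ _).trans (by linarith)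
  have hbox : Iic a ×ˢ Ici c ∩ Icc (0 : ℝ) (1 / 2) ×ˢ Icc (1 / 2 : ℝ) 1 =
      Icc 0 (min a (1 / 2)) ×ˢ Icc (max c (1 / 2)) 1 := by
    ext p
    simp only [mem_inter_iff, mem_prod, mem_Iic, mem_Ici, mem_Icc, le_min_iff, max_le_iff]
    tauto
  rw [← measure_inter_conull hsupp, hbox, measure_Icc_prod_Icc_eq_min hsupp hx hy hI2
    (le_min ha (by norm_num)) (min_le_right _ _) (le_max_right _ _) (max_le hc (by norm_num))]
  have hm : min a (1 / 2) ≤ 1 / 2 := min_le_right _ _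
  rcases le_total c (1 / 2) with h | h
  · rw [max_eq_right h, min_eq_left (show min a (1 / 2) ≤ 1 - 1 / 2 by linarith),
      min_eq_left (show min a (1 / 2) ≤ 1 - c by linarith)]
  · rw [max_eq_left h]

theorem stmt18 (μ : Measure (ℝ × ℝ))
    (hsub : μ Set.univ ≤ 1)
    (hsupp : μ ((Set.Icc (0 : ℝ) (1 / 2) ×ˢ Set.Icc (1 / 2 : ℝ) 1)ᶜ) = 0)
    (hx : ∀ a b : ℝ, 0 ≤ a → a ≤ b → b ≤ 1 / 2 →
      μ {p : ℝ × ℝ | a ≤ p.1 ∧ p.1 ≤ b} = ENNReal.ofReal (b - a))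
    (hy : ∀ a b : ℝ, 1 / 2 ≤ a → a ≤ b → b ≤ 1 →
      μ {p : ℝ × ℝ | a ≤ p.2 ∧ p.2 ≤ b} = ENNReal.ofReal (b - a))
    (hI2 : (μ.prod μ) {q : (ℝ × ℝ) × (ℝ × ℝ) |
      q.1.1 < q.2.1 ∧ q.2.1 < q.1.2 ∧ q.1.2 < q.2.2} = 0) :
    μ = OmegaMeas ∧
      ∀ a b : ℝ, a ∈ Set.Icc (0 : ℝ) (1 / 2) → b ∈ Set.Icc (0 : ℝ) (1 / 2) →
        μ (Set.Icc 0 a ×ˢ Set.Icc (1 - b) 1) = ENNReal.ofReal (min a b) := by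
  have : IsFiniteMeasure μ := ⟨hsub.trans_lt ENNReal.one_lt_top⟩
  refine ⟨Measure.ext_of_Iic_prod_Ici fun a c => ?_, fun a b ha hb => ?_⟩
  · rw [measure_Iic_prod_Ici_eq hsupp hx hy hI2, OmegaMeas_Iic_prod_Ici]
  · have hR := measure_Icc_prod_Icc_eq_min hsupp hx hy hI2 (c := 1 - b) ha.1 ha.2
      (by linarith [hb.2]) (by linarith [hb.1])
    rwa [sub_sub_cancel] at hR
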